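/- If each Σ_i is symmetric positive definite and H + Σ_θ is symmetric, then the full KKT matrix of the system in the previous context is invertible if and only if the condensed matrix H + Σ_θ + ∑_i J_i^T Σ_i J_i is invertible. -/
import Mathlib

open Matrix

lemma aux_mulVec_inj_iff {n : Type*} [Fintype n] (A : Matrix n n ℝ) :
    Function.Injective A.mulVec ↔ ∀ v, A.mulVec v = 0 → v = 0 := by
  constructor
  · intro h v hv
    exact h (by simpa using hv)
  · intro h u v huv
    have := h (u - v) (by rw [Matrix.mulVec_sub, huv, sub_self])
    exact sub_eq_zero.mp this

lemma aux_sum_mulVec {n ι : Type*} [Fintype n] [Fintype ι] (A : ι → Matrix n n ℝ)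
    (x : n → ℝ) : (∑ s, A s) *ᵥ x = ∑ s, (A s) *ᵥ x := by
  ext i
  simp [Matrix.mulVec, dotProduct, Matrix.sum_apply, Finset.sum_mul]
  rw [Finset.sum_comm]

set_option maxHeartbeats 1000000 in
/-- With each `Σ_i` symmetric positive definite and `H + Σ_θ` symmetric, the full KKT matrix
`K = [[H+Σ_θ, 0, Jᵀ],[0, Σ, I],[J, I, 0]]` is invertible iff the condensed matrix
`H + Σ_θ + ∑ i, Jᵢᵀ Σᵢ Jᵢ` is invertible. -/
theorem kkt_invertible_iff_condensed_invertible (p m S : ℕ)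
    (HSθ : Matrix (Fin p) (Fin p) ℝ) (hsym : HSθ.IsSymm)
    (J : Fin S → Matrix (Fin m) (Fin p) ℝ)
    (Si : Fin S → Matrix (Fin m) (Fin m) ℝ) (hSi : ∀ i, (Si i).PosDef)
    (K : Matrix (Fin p ⊕ ((Fin S × Fin m) ⊕ (Fin S × Fin m)))
                (Fin p ⊕ ((Fin S × Fin m) ⊕ (Fin S × Fin m))) ℝ)
    (hK : ∀ a b, K a b =
      match a, b with
      | Sum.inl i, Sum.inl j => HSθ i j
      | Sum.inl _, Sum.inr (Sum.inl _) => 0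
      | Sum.inl i, Sum.inr (Sum.inr (s, k)) => J s k i
      | Sum.inr (Sum.inl _), Sum.inl _ => 0
      | Sum.inr (Sum.inl (s, k)), Sum.inr (Sum.inl (s', k')) =>
          if s = s' then Si s k k' else 0
      | Sum.inr (Sum.inl (s, k)), Sum.inr (Sum.inr (s', k')) =>
          if s = s' ∧ k = k' then 1 else 0
      | Sum.inr (Sum.inr (s, k)), Sum.inl j => J s k j
      | Sum.inr (Sum.inr (s, k)), Sum.inr (Sum.inl (s', k')) =>
          if s = s' ∧ k = k' then 1 else 0
      | Sum.inr (Sum.inr _), Sum.inr (Sum.inr _) => 0) :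
    IsUnit K ↔ IsUnit (HSθ + ∑ i : Fin S, (J i)ᵀ * Si i * J i) := by
  have hrow1 : ∀ (v : (Fin p ⊕ ((Fin S × Fin m) ⊕ (Fin S × Fin m))) → ℝ) (i : Fin p),
      K.mulVec v (Sum.inl i) =
        HSθ.mulVec (fun j => v (Sum.inl j)) i
          + ∑ s, (J s)ᵀ.mulVec (fun k => v (Sum.inr (Sum.inr (s, k)))) i := by
    intro v i
    simp [Matrix.mulVec, dotProduct, Fintype.sum_sum_type, Fintype.sum_prod_type, hK,
      Matrix.transpose_apply]
  have hrow2 : ∀ (v : (Fin p ⊕ ((Fin S × Fin m) ⊕ (Fin S × Fin m))) → ℝ) (s : Fin S) (k : Fin m),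
      K.mulVec v (Sum.inr (Sum.inl (s, k))) =
        (Si s).mulVec (fun k' => v (Sum.inr (Sum.inl (s, k')))) k
          + v (Sum.inr (Sum.inr (s, k))) := by
    intro v s k
    simp [Matrix.mulVec, dotProduct, Fintype.sum_sum_type, Fintype.sum_prod_type, hK,
      ite_and, ite_mul, Finset.sum_ite_eq]
  have hrow3 : ∀ (v : (Fin p ⊕ ((Fin S × Fin m) ⊕ (Fin S × Fin m))) → ℝ) (s : Fin S) (k : Fin m),
      K.mulVec v (Sum.inr (Sum.inr (s, k))) =
        (J s).mulVec (fun j => v (Sum.inl j)) k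
          + v (Sum.inr (Sum.inl (s, k))) := by
    intro v s k
    simp [Matrix.mulVec, dotProduct, Fintype.sum_sum_type, Fintype.sum_prod_type, hK,
      ite_and, ite_mul, Finset.sum_ite_eq]
  rw [← Matrix.mulVec_injective_iff_isUnit, ← Matrix.mulVec_injective_iff_isUnit,
    aux_mulVec_inj_iff, aux_mulVec_inj_iff]
  constructor
  · -- K kernel trivial → condensed kernel trivial
    intro hKker x hx
    set v : (Fin p ⊕ ((Fin S × Fin m) ⊕ (Fin S × Fin m))) → ℝ :=
      Sum.elim x (Sum.elim (fun sk => (-(J sk.1 *ᵥ x)) sk.2)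
        (fun sk => (Si sk.1 *ᵥ (J sk.1 *ᵥ x)) sk.2)) with hv
    have hKv : K.mulVec v = 0 := by
      funext a
      rcases a with i | (⟨s, k⟩ | ⟨s, k⟩)
      · rw [hrow1]
        have h1 : (fun j => v (Sum.inl j)) = x := rfl
        have h2 : ∀ s : Fin S, (fun k => v (Sum.inr (Sum.inr (s, k)))) =
            Si s *ᵥ (J s *ᵥ x) := fun s => rfl
        have := congrFun hx i
        simp only [Matrix.add_mulVec, aux_sum_mulVec, Pi.add_apply, Finset.sum_apply,
          Pi.zero_apply] at this
        simp only [h1, h2, Matrix.mulVec_mulVec, Pi.zero_apply]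
        simpa only [Matrix.mul_assoc] using this
      · rw [hrow2]
        have h1 : (fun k' => v (Sum.inr (Sum.inl (s, k')))) = -(J s *ᵥ x) := rfl
        rw [h1, Matrix.mulVec_neg]
        simp [hv]
      · rw [hrow3]
        have h1 : (fun j => v (Sum.inl j)) = x := rfl
        rw [h1]
        simp [hv]
    have := hKker v hKv
    funext i
    exact congrFun this (Sum.inl i)
  · -- condensed kernel trivial → K kernel trivial
    intro hMker v hv
    set x : Fin p → ℝ := fun j => v (Sum.inl j) with hxdef
    have hy : ∀ s : Fin S, (fun k => v (Sum.inr (Sum.inl (s, k)))) = -(J s *ᵥ x) := by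
      intro s
      funext k
      have := congrFun hv (Sum.inr (Sum.inr (s, k)))
      rw [hrow3] at this
      simp only [Pi.zero_apply] at this
      simp [Pi.neg_apply]
      linarith [this]
    have hl : ∀ s : Fin S, (fun k => v (Sum.inr (Sum.inr (s, k)))) =
        Si s *ᵥ (J s *ᵥ x) := by
      intro s
      funext k
      have := congrFun hv (Sum.inr (Sum.inl (s, k)))
      rw [hrow2] at this
      rw [hy s, Matrix.mulVec_neg] at this
      simp only [Pi.zero_apply, Pi.neg_apply] at this
      linarith [this]
    have hx0 : x = 0 := by
      apply hMker
      funext i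
      have := congrFun hv (Sum.inl i)
      rw [hrow1] at this
      simp only [hl] at this
      simp only [Matrix.add_mulVec, aux_sum_mulVec, Pi.add_apply, Finset.sum_apply,
        Pi.zero_apply] at this ⊢
      rw [← this]
      congr 1
      apply Finset.sum_congr rfl
      intro s _
      rw [Matrix.mulVec_mulVec, Matrix.mulVec_mulVec]
    funext a
    rcases a with i | (⟨s, k⟩ | ⟨s, k⟩)
    · exact congrFun hx0 i
    · have := congrFun (hy s) k
      simp only [hx0, Matrix.mulVec_zero, Pi.neg_apply, Pi.zero_apply, neg_zero] at this
      exact this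
    · have := congrFun (hl s) k
      simp only [hx0, Matrix.mulVec_zero, Pi.zero_apply] at this
      exact this
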